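/- Let x = (x₁, x₂) : ℝ → ℝ² be a differentiable solution of the nonlinear system x₁' = −x₂ + x₁(1 − x₁² − x₂²), x₂' = x₁ + x₂(1 − x₁² − x₂²), and suppose that for all t the radius r(t) := √(x₁(t)² + x₂(t)²) satisfies r(t) > 0 and r(t) ≠ 1. Then the function ŷ₁(t) := ln( r(t) / √|1 − r(t)²| ) is a unit manifold coordinate: ŷ₁'(t) = 1 for all t, i.e. ŷ₁(t) = ŷ₁(0) + t. -/

import Mathlib

/-! The squared radius `u = x₁² + x₂²` obeys the logistic equation `u' = 2u(1 - u)`, and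
`ŷ₁ = (log u - log (1 - u)) / 2` is half the logit of `u`, whose derivative along any logistic
solution is constant, here `1`. -/

open Real

theorem hasDerivAt_sq_add_sq_of_limitCycle {x₁ x₂ : ℝ → ℝ} {t : ℝ}
    (hx₁ : HasDerivAt x₁ (-x₂ t + x₁ t * (1 - x₁ t ^ 2 - x₂ t ^ 2)) t)
    (hx₂ : HasDerivAt x₂ (x₁ t + x₂ t * (1 - x₁ t ^ 2 - x₂ t ^ 2)) t) :
    HasDerivAt (fun s => x₁ s ^ 2 + x₂ s ^ 2)
      (2 * (x₁ t ^ 2 + x₂ t ^ 2) * (1 - (x₁ t ^ 2 + x₂ t ^ 2))) t :=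
  ((hx₁.pow 2).add (hx₂.pow 2)).congr_deriv (by push_cast; ring)

theorem hasDerivAt_log_sub_log_one_sub_of_logistic {u : ℝ → ℝ} {k t : ℝ}
    (hu : HasDerivAt u (k * u t * (1 - u t)) t) (h₀ : u t ≠ 0) (h₁ : u t ≠ 1) :
    HasDerivAt (fun s => log (u s) - log (1 - u s)) k t := by
  have h₁' : 1 - u t ≠ 0 := sub_ne_zero.2 (Ne.symm h₁)
  refine ((hu.log h₀).sub ((hu.const_sub 1).log h₁')).congr_deriv ?_
  field_simp
  ring

theorem log_div_sqrt_abs_one_sub_sq {ρ : ℝ} (hρ : 0 < ρ) (h₁ : ρ ^ 2 ≠ 1) :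
    log (ρ / √|1 - ρ ^ 2|) = (log (ρ ^ 2) - log (1 - ρ ^ 2)) / 2 := by
  have hsqrt : √|1 - ρ ^ 2| ≠ 0 :=
    Real.sqrt_ne_zero'.2 (abs_pos.2 (sub_ne_zero.2 (Ne.symm h₁)))
  rw [log_div hρ.ne' hsqrt, log_sqrt (abs_nonneg _), log_abs, log_pow]
  push_cast
  ring

theorem eq_add_mul_of_hasDerivAt_const {f : ℝ → ℝ} {c : ℝ} (hf : ∀ t, HasDerivAt f c t)
    (t : ℝ) : f t = f 0 + c * t := by
  have hg : ∀ s, HasDerivAt (fun s => f s - c * s) 0 s := fun s =>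
    ((hf s).sub ((hasDerivAt_id s).const_mul c)).congr_deriv (by simp)
  have := is_const_of_deriv_eq_zero (fun s => (hg s).differentiableAt) (fun s => (hg s).deriv) t 0
  simp only [mul_zero, sub_zero] at this
  linarith

/-- Along any solution of the planar limit-cycle system whose radius
`r = √(x₁² + x₂²)` satisfies `r > 0` and `r ≠ 1` for all times, the canonical split
coordinate `ŷ₁ = ln(r/√|1 − r²|)` is a unit manifold coordinate: `ŷ₁' = 1`, i.e.
`ŷ₁(t) = ŷ₁(0) + t`. -/
theorem limit_cycle_unit_manifold
    (x₁ x₂ : ℝ → ℝ)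
    (hx₁ : ∀ t : ℝ, HasDerivAt x₁ (-x₂ t + x₁ t * (1 - (x₁ t) ^ 2 - (x₂ t) ^ 2)) t)
    (hx₂ : ∀ t : ℝ, HasDerivAt x₂ (x₁ t + x₂ t * (1 - (x₁ t) ^ 2 - (x₂ t) ^ 2)) t)
    (r : ℝ → ℝ) (hr : ∀ t : ℝ, r t = Real.sqrt ((x₁ t) ^ 2 + (x₂ t) ^ 2))
    (hrpos : ∀ t : ℝ, 0 < r t) (hrne : ∀ t : ℝ, r t ≠ 1) :
    (∀ t : ℝ, HasDerivAt (fun s => Real.log (r s / Real.sqrt |1 - (r s) ^ 2|)) 1 t) ∧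
    (∀ t : ℝ, Real.log (r t / Real.sqrt |1 - (r t) ^ 2|) =
      Real.log (r 0 / Real.sqrt |1 - (r 0) ^ 2|) + t) := by
  set u : ℝ → ℝ := fun s => x₁ s ^ 2 + x₂ s ^ 2
  have hru : ∀ t, r t ^ 2 = u t := fun t => by rw [hr t, sq_sqrt (by positivity)]
  have hu₀ : ∀ t, u t ≠ 0 := fun t => hru t ▸ (pow_pos (hrpos t) 2).ne'
  have hu₁ : ∀ t, u t ≠ 1 := fun t =>
    hru t ▸ mt (pow_eq_one_iff_of_nonneg (hrpos t).le two_ne_zero).1 (hrne t)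
  have hy : (fun s => log (r s / √|1 - r s ^ 2|)) =
      fun s => (log (u s) - log (1 - u s)) / 2 := by
    funext s
    rw [log_div_sqrt_abs_one_sub_sq (hrpos s) (hru s ▸ hu₁ s), hru s]
  have hderiv : ∀ t, HasDerivAt (fun s => log (r s / √|1 - r s ^ 2|)) 1 t := fun t => by
    rw [hy]
    simpa using (hasDerivAt_log_sub_log_one_sub_of_logistic
      (hasDerivAt_sq_add_sq_of_limitCycle (hx₁ t) (hx₂ t)) (hu₀ t) (hu₁ t)).div_const 2
  exact ⟨hderiv, fun t => by simpa using eq_add_mul_of_hasDerivAt_const hderiv t⟩
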